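/- arXiv:2504.18098 — 2 statements merged into one kernel-verified Lean document; each statement's English description precedes it below -/
import Mathlib

section
/- The witness W_2 can fail to detect magic that the stabilizer norm detects: for the depolarized single-qubit T-state at p = 1/5, namely ρ = (4/5)|T⟩⟨T| + (1/10)I₂, one has D(ρ) > 1 (so ρ is a nonstabilizer state) while W_2(ρ) < 0. -/
/-! The stabilizer norm is `2⁻ⁿ` times the ℓ¹ norm of the Pauli spectrum `a ↦ tr(ρ Pₐ)`, which is
a seminorm in `ρ`. The projector `|0⟩⟨0|^{⊗n}` is the average of the `2ⁿ` Pauli strings in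
`{I, σᶻ}ⁿ`, and a Clifford conjugation sends each of them to `±` a Pauli string, whose Pauli
spectrum is a single entry `±2ⁿ` by orthogonality of the Pauli strings. Hence `D ≤ 1` on pure
stabilizer states and, by the triangle inequality, on all mixed stabilizer states.

On the other side, `ρ_p = (I + b (σˣ - σʸ)) / 2` with `b = (1 - p)/√2`, so that
`A_α(ρ_p) = (1 + 2 |b|^{2α}) / 2` and `tr ρ_p² = (1 + 2 b²) / 2`. At `p = 1/5`, `b² = 8/25`, which
gives `D(ρ) = 1/2 + 2√2/5 > 1` and `W₂(ρ) = ln ((41/50)³ / (753/1250)) < 0`. -/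

open Matrix Complex BigOperators
open scoped ComplexOrder

noncomputable section

/-- Index type for `n` qubits: functions `Fin n → Fin 2` (cardinality `2^n`). -/
abbrev QIdx (n : ℕ) := Fin n → Fin 2

/-- The four single-qubit Pauli matrices: `σ⁰ = I`, `σ¹ = σˣ`, `σ² = σᶻ`, `σ³ = σʸ`. -/
def pauliMat : Fin 4 → Matrix (Fin 2) (Fin 2) ℂ
  | 0 => 1
  | 1 => !![0, 1; 1, 0]
  | 2 => !![1, 0; 0, -1]
  | 3 => !![0, -Complex.I; Complex.I, 0]

/-- The Pauli string `σ^{a_1} ⊗ ⋯ ⊗ σ^{a_n}` as a `2^n × 2^n` matrix. -/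
def pauliString {n : ℕ} (a : Fin n → Fin 4) : Matrix (QIdx n) (QIdx n) ℂ :=
  fun i j => ∏ k, pauliMat (a k) (i k) (j k)

/-- An `n`-qubit state: positive semidefinite with unit trace. -/
def IsState {n : ℕ} (ρ : Matrix (QIdx n) (QIdx n) ℂ) : Prop :=
  ρ.PosSemidef ∧ ρ.trace = 1

/-- The `α`-moment of the Pauli spectrum `A_α(ρ) = 2^{-n} ∑_P |tr(ρP)|^{2α}`. -/
def Amom {n : ℕ} (α : ℝ) (ρ : Matrix (QIdx n) (QIdx n) ℂ) : ℝ :=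
  ((2:ℝ)^n)⁻¹ * ∑ a : Fin n → Fin 4, (‖(ρ * pauliString a).trace‖) ^ (2 * α)

/-- The 2-Rényi entropy `S₂(ρ) = -ln tr(ρ²)`. -/
def S2 {n : ℕ} (ρ : Matrix (QIdx n) (QIdx n) ℂ) : ℝ :=
  - Real.log ((ρ * ρ).trace.re)

/-- The magic witness `W_α(ρ) = (1/(1-α)) ln A_α(ρ) - ((1-2α)/(1-α)) S₂(ρ)`. -/
def Wit {n : ℕ} (α : ℝ) (ρ : Matrix (QIdx n) (QIdx n) ℂ) : ℝ :=
  (1 / (1 - α)) * Real.log (Amom α ρ) - ((1 - 2*α)/(1 - α)) * S2 ρ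

/-- The stabilizer norm `D(ρ) = A_{1/2}(ρ) = 2^{-n} ∑_P |tr(ρP)|`. -/
def Dnorm {n : ℕ} (ρ : Matrix (QIdx n) (QIdx n) ℂ) : ℝ :=
  Amom (1/2) ρ

/-- A Clifford unitary: unitary mapping every Pauli string to `±` a Pauli string. -/
def IsCliffordUnitary {n : ℕ} (U : Matrix (QIdx n) (QIdx n) ℂ) : Prop :=
  U ∈ Matrix.unitaryGroup (QIdx n) ℂ ∧
    ∀ a : Fin n → Fin 4, ∃ (b : Fin n → Fin 4) (ε : ℝ),
      (ε = 1 ∨ ε = -1) ∧ U * pauliString a * Uᴴ = (ε : ℂ) • pauliString b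

/-- The computational all-zeros basis vector `|0⟩^{⊗n}`. -/
def zeroVec (n : ℕ) : QIdx n → ℂ :=
  fun i => if (∀ k, i k = 0) then 1 else 0

/-- A pure stabilizer state vector: `U|0⟩^{⊗n}` for a Clifford unitary `U`. -/
def IsPureStab {n : ℕ} (ψ : QIdx n → ℂ) : Prop :=
  ∃ U, IsCliffordUnitary U ∧ ψ = U.mulVec (zeroVec n)

/-- The rank-one projector `|ψ⟩⟨ψ|`. -/
def proj {n : ℕ} (ψ : QIdx n → ℂ) : Matrix (QIdx n) (QIdx n) ℂ :=
  Matrix.vecMulVec ψ (star ψ)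

/-- A mixed stabilizer state: a finite convex combination of pure stabilizer projectors. -/
def IsMixedStab {n : ℕ} (ρ : Matrix (QIdx n) (QIdx n) ℂ) : Prop :=
  ∃ (k : ℕ) (p : Fin k → ℝ) (ψ : Fin k → QIdx n → ℂ),
    (∀ i, 0 ≤ p i) ∧ (∑ i, p i = 1) ∧ (∀ i, IsPureStab (ψ i)) ∧
    ρ = ∑ i, (p i : ℂ) • proj (ψ i)

/-- The set of values `ln ∑ᵢ |xᵢ|` over finite real stabilizer decompositions of `ρ`. -/
def StabDecomps {n : ℕ} (ρ : Matrix (QIdx n) (QIdx n) ℂ) : Set ℝ :=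
  { r | ∃ (k : ℕ) (x : Fin k → ℝ) (ψ : Fin k → QIdx n → ℂ),
      (∀ i, IsPureStab (ψ i)) ∧ ρ = ∑ i, (x i : ℂ) • proj (ψ i) ∧
      r = Real.log (∑ i, |x i|) }

/-- The log-free robustness of magic. -/
def LR {n : ℕ} (ρ : Matrix (QIdx n) (QIdx n) ℂ) : ℝ := sInf (StabDecomps ρ)

open Classical in
/-- Positive-semidefinite square root (junk value `0` off the PSD cone). -/
def psdSqrt {n : ℕ} (A : Matrix (QIdx n) (QIdx n) ℂ) : Matrix (QIdx n) (QIdx n) ℂ :=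
  if h : A.PosSemidef then
    (h.1.eigenvectorUnitary : Matrix (QIdx n) (QIdx n) ℂ) *
      diagonal (((↑) : ℝ → ℂ) ∘ Real.sqrt ∘ h.1.eigenvalues) *
      (star h.1.eigenvectorUnitary : Matrix (QIdx n) (QIdx n) ℂ)
  else 0

/-- The Uhlmann fidelity `F(ρ,σ) = (tr √(√ρ σ √ρ))²`. -/
def fidelity {n : ℕ} (ρ σ : Matrix (QIdx n) (QIdx n) ℂ) : ℝ :=
  ((psdSqrt (psdSqrt ρ * σ * psdSqrt ρ)).trace.re) ^ 2

/-- The stabilizer fidelity `D_F(ρ) = inf { -ln F(ρ,σ) : σ a mixed stabilizer state }`. -/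
def DF {n : ℕ} (ρ : Matrix (QIdx n) (QIdx n) ℂ) : ℝ :=
  sInf { r | ∃ σ, IsMixedStab σ ∧ r = - Real.log (fidelity ρ σ) }

/-- Filtered Pauli moment `Ã_α(ρ) = (2^n A_α(ρ) - 1)/(2^n - 1)`. -/
def Atil {n : ℕ} (α : ℝ) (ρ : Matrix (QIdx n) (QIdx n) ℂ) : ℝ :=
  ((2:ℝ)^n * Amom α ρ - 1) / ((2:ℝ)^n - 1)

/-- Filtered stabilizer norm `D̃(ρ) = (2^n D(ρ) - 1)/(2^n - 1)`. -/
def Dtil {n : ℕ} (ρ : Matrix (QIdx n) (QIdx n) ℂ) : ℝ :=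
  ((2:ℝ)^n * Dnorm ρ - 1) / ((2:ℝ)^n - 1)

/-- Filtered magic witness `W̃_α(ρ) = (1/(1-α)) ln Ã_α(ρ) + ((1-2α)/(1-α)) ln Ã₁(ρ)`. -/
def Wtil {n : ℕ} (α : ℝ) (ρ : Matrix (QIdx n) (QIdx n) ℂ) : ℝ :=
  (1/(1-α)) * Real.log (Atil α ρ) + ((1 - 2*α)/(1-α)) * Real.log (Atil 1 ρ)

/-- The maximally mixed state `I/2^n`. -/
def maxMixed (n : ℕ) : Matrix (QIdx n) (QIdx n) ℂ := ((2:ℂ)^n)⁻¹ • 1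

/-- The single-qubit T-state vector `|T⟩ = (|0⟩ + e^{-iπ/4}|1⟩)/√2`. -/
def Tket : QIdx 1 → ℂ :=
  fun i => if i 0 = 0 then (Real.sqrt 2 : ℂ)⁻¹
           else Complex.exp (-(Real.pi/4 : ℂ) * Complex.I) * (Real.sqrt 2 : ℂ)⁻¹

/-- The depolarized T-state `ρ_p = (1-p)|T⟩⟨T| + p·I₂/2`. -/
def rhoDep (p : ℝ) : Matrix (QIdx 1) (QIdx 1) ℂ :=
  ((1 - p : ℝ) : ℂ) • proj Tket + ((p : ℝ) : ℂ) • (((2:ℂ))⁻¹ • 1)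

lemma trace_pauliMat_mul_pauliMat (k m : Fin 4) :
    (pauliMat k * pauliMat m).trace = if k = m then 2 else 0 := by
  fin_cases k <;> fin_cases m <;> simp [pauliMat, trace_fin_two, one_fin_two] <;> norm_num

lemma trace_pauliString_mul_pauliString {n : ℕ} (a b : Fin n → Fin 4) :
    (pauliString a * pauliString b).trace = if a = b then 2 ^ n else 0 := by
  have h : (pauliString a * pauliString b).trace = ∏ k, (pauliMat (a k) * pauliMat (b k)).trace := by
    simp only [trace, diag, mul_apply, pauliString, ← Finset.prod_mul_distrib, Fintype.prod_sum]
  rw [h]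
  simp only [trace_pauliMat_mul_pauliMat]
  split_ifs with hab
  · simp [hab]
  · obtain ⟨k, hk⟩ := Function.ne_iff.mp hab
    exact Finset.prod_eq_zero (Finset.mem_univ k) (if_neg hk)

lemma proj_mulVec {n : ℕ} (U : Matrix (QIdx n) (QIdx n) ℂ) (v : QIdx n → ℂ) :
    proj (U *ᵥ v) = U * proj v * Uᴴ := by
  rw [proj, proj, star_mulVec, mul_vecMulVec, vecMulVec_mul]

lemma proj_zeroVec (n : ℕ) :
    proj (zeroVec n) =
      ((2 : ℂ) ^ n)⁻¹ • ∑ a ∈ Fintype.piFinset (fun _ : Fin n => ({0, 2} : Finset (Fin 4))),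
        pauliString a := by
  ext i j
  have hsum (x y : Fin 2) :
      ∑ m ∈ ({0, 2} : Finset (Fin 4)), pauliMat m x y = if x = 0 ∧ y = 0 then 2 else 0 := by
    fin_cases x <;> fin_cases y <;> simp [pauliMat, one_add_one_eq_two]
  simp only [Matrix.smul_apply, Matrix.sum_apply, pauliString, smul_eq_mul]
  rw [← Finset.prod_univ_sum (fun _ => {0, 2}) (fun k m => pauliMat m (i k) (j k))]
  simp only [hsum, Finset.prod_ite_zero, Finset.prod_const, Finset.card_univ, Fintype.card_fin,
    proj, vecMulVec_apply, Pi.star_apply, zeroVec]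
  split_ifs <;> simp_all

def pauliL1Norm {n : ℕ} (ρ : Matrix (QIdx n) (QIdx n) ℂ) : ℝ :=
  ∑ a : Fin n → Fin 4, ‖(ρ * pauliString a).trace‖

lemma Dnorm_eq_pauliL1Norm {n : ℕ} (ρ : Matrix (QIdx n) (QIdx n) ℂ) :
    Dnorm ρ = ((2 : ℝ) ^ n)⁻¹ * pauliL1Norm ρ := by
  simp [Dnorm, Amom, pauliL1Norm]

lemma pauliL1Norm_sum_smul_le {n : ℕ} {ι : Type*} (s : Finset ι) (c : ι → ℂ)
    (M : ι → Matrix (QIdx n) (QIdx n) ℂ) :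
    pauliL1Norm (∑ i ∈ s, c i • M i) ≤ ∑ i ∈ s, ‖c i‖ * pauliL1Norm (M i) := by
  simp only [pauliL1Norm, Finset.mul_sum]
  rw [Finset.sum_comm]
  gcongr with a
  simp only [Finset.sum_mul, trace_sum, smul_mul_assoc, trace_smul, smul_eq_mul]
  exact (norm_sum_le _ _).trans_eq (by simp)

lemma pauliL1Norm_smul {n : ℕ} (c : ℂ) (M : Matrix (QIdx n) (QIdx n) ℂ) :
    pauliL1Norm (c • M) = ‖c‖ * pauliL1Norm M := by
  simp [pauliL1Norm, Finset.mul_sum, trace_smul]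

lemma pauliL1Norm_pauliString {n : ℕ} (b : Fin n → Fin 4) :
    pauliL1Norm (pauliString b) = 2 ^ n := by
  simp [pauliL1Norm, trace_pauliString_mul_pauliString, apply_ite norm]

lemma IsCliffordUnitary.pauliL1Norm_conj_pauliString {n : ℕ} {U : Matrix (QIdx n) (QIdx n) ℂ}
    (hU : IsCliffordUnitary U) (a : Fin n → Fin 4) :
    pauliL1Norm (U * pauliString a * Uᴴ) = 2 ^ n := by
  obtain ⟨b, ε, hε, hab⟩ := hU.2 a
  rw [hab, pauliL1Norm_smul, pauliL1Norm_pauliString]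
  rcases hε with rfl | rfl <;> simp

lemma IsPureStab.pauliL1Norm_proj_le {n : ℕ} {ψ : QIdx n → ℂ} (hψ : IsPureStab ψ) :
    pauliL1Norm (proj ψ) ≤ 2 ^ n := by
  obtain ⟨U, hU, rfl⟩ := hψ
  set Z := Fintype.piFinset (fun _ : Fin n => ({0, 2} : Finset (Fin 4)))
  have hproj : proj (U *ᵥ zeroVec n) = ∑ a ∈ Z, ((2 : ℂ) ^ n)⁻¹ • (U * pauliString a * Uᴴ) := by
    rw [proj_mulVec, proj_zeroVec, Matrix.mul_smul, Matrix.smul_mul, Finset.mul_sum, Finset.sum_mul,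
      Finset.smul_sum]
  have hZ : Z.card = 2 ^ n := by simp [Z]
  calc pauliL1Norm (proj (U *ᵥ zeroVec n))
      ≤ ∑ a ∈ Z, ‖((2 : ℂ) ^ n)⁻¹‖ * pauliL1Norm (U * pauliString a * Uᴴ) := by
        rw [hproj]; exact pauliL1Norm_sum_smul_le _ _ _
    _ = 2 ^ n := by simp [hU.pauliL1Norm_conj_pauliString, hZ]

lemma IsMixedStab.Dnorm_le_one {n : ℕ} {ρ : Matrix (QIdx n) (QIdx n) ℂ} (hρ : IsMixedStab ρ) :
    Dnorm ρ ≤ 1 := by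
  obtain ⟨k, p, ψ, hp, hp1, hψ, rfl⟩ := hρ
  have hL1 : pauliL1Norm (∑ i, (p i : ℂ) • proj (ψ i)) ≤ 2 ^ n :=
    calc _ ≤ ∑ i, ‖(p i : ℂ)‖ * pauliL1Norm (proj (ψ i)) := pauliL1Norm_sum_smul_le _ _ _
      _ ≤ ∑ i, p i * 2 ^ n := by
        refine Finset.sum_le_sum fun i _ => ?_
        rw [Complex.norm_real, Real.norm_of_nonneg (hp i)]
        exact mul_le_mul_of_nonneg_left (hψ i).pauliL1Norm_proj_le (hp i)
      _ = 2 ^ n := by rw [← Finset.sum_mul, hp1, one_mul]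
  rw [Dnorm_eq_pauliL1Norm]
  calc ((2 : ℝ) ^ n)⁻¹ * _ ≤ ((2 : ℝ) ^ n)⁻¹ * 2 ^ n := by gcongr
    _ = 1 := inv_mul_cancel₀ (by positivity)

lemma ofReal_sqrt_two_sq : (Real.sqrt 2 : ℂ) ^ 2 = 2 := by
  exact_mod_cast Real.sq_sqrt zero_le_two

lemma Tket_zero : Tket (fun _ => 0) = (Real.sqrt 2 : ℂ)⁻¹ := rfl

lemma Tket_one : Tket (fun _ => 1) = (1 - I) / 2 := by
  have h : (-(Real.pi / 4 : ℂ)) = ((-(Real.pi / 4) : ℝ) : ℂ) := by push_cast; ring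
  rw [Tket, if_neg (by decide), h, exp_mul_I, ← ofReal_cos, ← ofReal_sin, Real.cos_neg,
    Real.sin_neg, Real.cos_pi_div_four, Real.sin_pi_div_four]
  field_simp
  push_cast
  ring

lemma qidx_one_eq_const (i : QIdx 1) : i = fun _ => i 0 :=
  funext fun k => by rw [Subsingleton.elim k 0]

lemma rhoDep_eq_bloch (p : ℝ) :
    rhoDep p = (2 : ℂ)⁻¹ • (pauliString (fun _ => 0) +
      (((1 - p) / Real.sqrt 2 : ℝ) : ℂ) • (pauliString (fun _ => 1) - pauliString (fun _ => 3))) := by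
  ext i j
  rw [qidx_one_eq_const i, qidx_one_eq_const j]
  generalize i 0 = x
  generalize j 0 = y
  fin_cases x <;> fin_cases y <;>
    simp [rhoDep, proj, vecMulVec_apply, pauliString, pauliMat, Tket_zero, Tket_one, funext_iff] <;>
    field_simp
  · linear_combination ((p : ℂ) - 1) * ofReal_sqrt_two_sq
  · linear_combination ((p : ℂ) - 1) * I_sq

lemma trace_rhoDep_mul_pauliString (p : ℝ) (k : Fin 4) :
    (rhoDep p * pauliString (fun _ => k)).trace =
      ![1, (((1 - p) / Real.sqrt 2 : ℝ) : ℂ), 0, -(((1 - p) / Real.sqrt 2 : ℝ) : ℂ)] k := by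
  rw [rhoDep_eq_bloch]
  simp only [Matrix.smul_mul, Matrix.add_mul, Matrix.sub_mul, trace_smul, trace_add, trace_sub,
    trace_pauliString_mul_pauliString, funext_iff]
  fin_cases k <;> simp <;> ring

lemma trace_rhoDep_mul_self (p : ℝ) :
    (rhoDep p * rhoDep p).trace = ((1 + 2 * ((1 - p) / Real.sqrt 2) ^ 2) / 2 : ℝ) := by
  nth_rw 2 [rhoDep_eq_bloch]
  simp only [Matrix.mul_smul, Matrix.mul_add, Matrix.mul_sub, trace_smul, trace_add, trace_sub,
    trace_rhoDep_mul_pauliString]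
  simp
  ring

lemma sum_fin_one_fin_four {M : Type*} [AddCommMonoid M] (f : (Fin 1 → Fin 4) → M) :
    ∑ a, f a = f (fun _ => 0) + f (fun _ => 1) + f (fun _ => 2) + f (fun _ => 3) := by
  rw [← (Equiv.funUnique (Fin 1) (Fin 4)).symm.sum_comp f, Fin.sum_univ_four]
  rfl

lemma Amom_rhoDep (p : ℝ) {α : ℝ} (hα : α ≠ 0) :
    Amom α (rhoDep p) = (1 + 2 * |(1 - p) / Real.sqrt 2| ^ (2 * α)) / 2 := by
  rw [Amom, sum_fin_one_fin_four]
  simp only [trace_rhoDep_mul_pauliString, cons_val, norm_one, norm_zero, norm_neg, norm_real,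
    Real.norm_eq_abs, Real.one_rpow, Real.zero_rpow (mul_ne_zero two_ne_zero hα)]
  ring

lemma sq_one_sub_one_fifth_div_sqrt_two : ((1 - 1 / 5 : ℝ) / Real.sqrt 2) ^ 2 = 8 / 25 := by
  rw [div_pow, Real.sq_sqrt zero_le_two]; norm_num

lemma one_lt_Dnorm_rhoDep_one_fifth : 1 < Dnorm (rhoDep (1 / 5)) := by
  rw [Dnorm, Amom_rhoDep _ one_half_pos.ne', show (2 * (1 / 2) : ℝ) = 1 by norm_num,
    Real.rpow_one, abs_of_pos (by positivity)]
  nlinarith [sq_one_sub_one_fifth_div_sqrt_two,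
    show 0 < (1 - 1 / 5 : ℝ) / Real.sqrt 2 by positivity]

lemma Wit_two_rhoDep_one_fifth_neg : Wit 2 (rhoDep (1 / 5)) < 0 := by
  have hA : |(1 - 1 / 5 : ℝ) / Real.sqrt 2| ^ (2 * 2 : ℝ) = (8 / 25) ^ 2 := by
    rw [show (2 * 2 : ℝ) = (2 * 2 : ℕ) by norm_num, Real.rpow_natCast, pow_mul, sq_abs,
      sq_one_sub_one_fifth_div_sqrt_two]
  have hlog := Real.log_lt_log (by norm_num) (show (41 / 50 : ℝ) ^ 3 < 753 / 1250 by norm_num)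
  rw [Real.log_pow] at hlog
  rw [Wit, S2, Amom_rhoDep _ two_ne_zero, trace_rhoDep_mul_self, ofReal_re, hA,
    sq_one_sub_one_fifth_div_sqrt_two]
  norm_num
  linarith

/-- at `p = 1/5` the depolarized T-state
`ρ = (4/5)|T⟩⟨T| + (1/10) I₂` has `D(ρ) > 1` (so it is a nonstabilizer state)
while `W₂(ρ) < 0`: the witness `W₂` fails to detect its magic. -/
theorem W2_fails_where_stabNorm_detects :
    1 < Dnorm (rhoDep (1/5)) ∧ ¬ IsMixedStab (rhoDep (1/5)) ∧
    Wit 2 (rhoDep (1/5)) < 0 :=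
  ⟨one_lt_Dnorm_rhoDep_one_fifth,
    fun h => h.Dnorm_le_one.not_gt one_lt_Dnorm_rhoDep_one_fifth,
    Wit_two_rhoDep_one_fifth_neg⟩

end
end

section
/- Let α ≥ 1 be an integer and define the 2^{2α} × 2^{2α} matrix ζ_α = (1/2)( I₂^{⊗2α} + (σ^x)^{⊗2α} + (σ^y)^{⊗2α} + (σ^z)^{⊗2α} ), where M^{⊗k} denotes the k-fold Kronecker power of a 2×2 matrix M. If α is odd then ζ_α² = I (the identity on dimension 2^{2α}), so ζ_α has eigenvalues in {+1,−1}; if α is even then ζ_α² = 2 ζ_α, so ζ_α/2 is a projector and ζ_α has eigenvalues in {0, 2}. -/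
open Matrix Complex BigOperators
open scoped ComplexOrder

noncomputable section

/-- The `k`-fold Kronecker power of a `2×2` matrix, as a matrix on `Fin k → Fin 2`. -/
def kronPow (M : Matrix (Fin 2) (Fin 2) ℂ) (k : ℕ) :
    Matrix (Fin k → Fin 2) (Fin k → Fin 2) ℂ :=
  fun i j => ∏ t, M (i t) (j t)

/-- `ζ_α = (1/2)(I₂^{⊗2α} + (σˣ)^{⊗2α} + (σʸ)^{⊗2α} + (σᶻ)^{⊗2α})`. -/
def zeta (α : ℕ) : Matrix (Fin (2*α) → Fin 2) (Fin (2*α) → Fin 2) ℂ :=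
  (2:ℂ)⁻¹ • (kronPow 1 (2*α) + kronPow (pauliMat 1) (2*α) +
    kronPow (pauliMat 3) (2*α) + kronPow (pauliMat 2) (2*α))

/- Write `S = (σˣ)^{⊗k} + (σʸ)^{⊗k} + (σᶻ)^{⊗k}`. Kronecker powers are multiplicative, and the
Pauli relations `σˣσʸ = iσᶻ`, `σʸσˣ = -iσᶻ` (and cyclically) give `S² = 3 + (iᵏ + (-i)ᵏ) S`.
For `k = 2α` the scalar is `2(-1)^α`, so `ζ_α = (1 + S)/2` satisfies `ζ_α² = 1` for odd `α` and
`ζ_α² = 1 + S = 2ζ_α` for even `α`. A matrix annihilated by `(X - a)(X - b)` has spectrum in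
`{a, b}`. -/

theorem spectrum_subset_pair_of_mul_eq_zero {𝕜 A : Type*} [Field 𝕜] [Ring A] [Algebra 𝕜 A]
    {x : A} {a b : 𝕜} (h : (x - algebraMap 𝕜 A a) * (x - algebraMap 𝕜 A b) = 0) :
    spectrum 𝕜 x ⊆ {a, b} := by
  intro μ hμ
  have hmem := spectrum.subset_polynomial_aeval x
    ((Polynomial.X - Polynomial.C a) * (Polynomial.X - Polynomial.C b)) ⟨μ, hμ, rfl⟩
  simp only [map_mul, map_sub, Polynomial.aeval_X, Polynomial.aeval_C, h,
    Polynomial.eval_mul, Polynomial.eval_sub, Polynomial.eval_X, Polynomial.eval_C] at hmem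
  have hroot : (μ - a) * (μ - b) = 0 := by
    by_contra hne
    exact (spectrum.mem_iff.mp hmem) (by simpa using (Ne.isUnit hne).map (algebraMap 𝕜 A))
  rcases mul_eq_zero.mp hroot with ha | hb
  · exact .inl (sub_eq_zero.mp ha)
  · exact .inr (sub_eq_zero.mp hb)

section KronPow

variable (k : ℕ)

theorem kronPow_mul (M N : Matrix (Fin 2) (Fin 2) ℂ) :
    kronPow M k * kronPow N k = kronPow (M * N) k := by
  ext i j
  simp only [kronPow, Matrix.mul_apply, Finset.prod_univ_sum, Fintype.piFinset_univ,
    Finset.prod_mul_distrib]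

theorem kronPow_smul (c : ℂ) (M : Matrix (Fin 2) (Fin 2) ℂ) :
    kronPow (c • M) k = c ^ k • kronPow M k := by
  ext i j
  simp [kronPow, Finset.prod_mul_distrib]

theorem kronPow_one : kronPow 1 k = 1 := by
  ext i j
  by_cases h : i = j
  · subst h
    simp [kronPow]
  · obtain ⟨t, ht⟩ := Function.ne_iff.mp h
    rw [Matrix.one_apply_ne h]
    exact Finset.prod_eq_zero (Finset.mem_univ t) (Matrix.one_apply_ne ht)

end KronPow

theorem pauliMat_mul_self (a : Fin 4) : pauliMat a * pauliMat a = 1 := by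
  fin_cases a <;> ext i j <;> fin_cases i <;> fin_cases j <;>
    simp [pauliMat, Matrix.mul_apply, Fin.sum_univ_two]

theorem pauliMat_one_mul_three : pauliMat 1 * pauliMat 3 = I • pauliMat 2 := by
  ext i j; fin_cases i <;> fin_cases j <;> simp [pauliMat, Matrix.mul_apply, Fin.sum_univ_two]

theorem pauliMat_three_mul_one : pauliMat 3 * pauliMat 1 = (-I) • pauliMat 2 := by
  ext i j; fin_cases i <;> fin_cases j <;> simp [pauliMat, Matrix.mul_apply, Fin.sum_univ_two]

theorem pauliMat_three_mul_two : pauliMat 3 * pauliMat 2 = I • pauliMat 1 := by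
  ext i j; fin_cases i <;> fin_cases j <;> simp [pauliMat, Matrix.mul_apply, Fin.sum_univ_two]

theorem pauliMat_two_mul_three : pauliMat 2 * pauliMat 3 = (-I) • pauliMat 1 := by
  ext i j; fin_cases i <;> fin_cases j <;> simp [pauliMat, Matrix.mul_apply, Fin.sum_univ_two]

theorem pauliMat_two_mul_one : pauliMat 2 * pauliMat 1 = I • pauliMat 3 := by
  ext i j; fin_cases i <;> fin_cases j <;> simp [pauliMat, Matrix.mul_apply, Fin.sum_univ_two]

theorem pauliMat_one_mul_two : pauliMat 1 * pauliMat 2 = (-I) • pauliMat 3 := by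
  ext i j; fin_cases i <;> fin_cases j <;> simp [pauliMat, Matrix.mul_apply, Fin.sum_univ_two]

def kronPauliSum (k : ℕ) : Matrix (Fin k → Fin 2) (Fin k → Fin 2) ℂ :=
  kronPow (pauliMat 1) k + kronPow (pauliMat 3) k + kronPow (pauliMat 2) k

theorem kronPauliSum_mul_self (k : ℕ) :
    kronPauliSum k * kronPauliSum k = (3 : ℂ) • 1 + (I ^ k + (-I) ^ k) • kronPauliSum k := by
  simp only [kronPauliSum, add_mul, mul_add, kronPow_mul, pauliMat_mul_self, kronPow_one,
    pauliMat_one_mul_three, pauliMat_three_mul_one, pauliMat_three_mul_two,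
    pauliMat_two_mul_three, pauliMat_two_mul_one, pauliMat_one_mul_two, kronPow_smul]
  match_scalars <;> ring

theorem I_pow_two_mul_add_neg_I_pow_two_mul (α : ℕ) :
    I ^ (2 * α) + (-I) ^ (2 * α) = 2 * (-1) ^ α := by
  simp only [pow_mul, neg_sq, I_sq]
  ring

theorem zeta_eq (α : ℕ) : zeta α = (2 : ℂ)⁻¹ • (1 + kronPauliSum (2 * α)) := by
  rw [zeta, kronPow_one, kronPauliSum, add_assoc, add_assoc, add_assoc]

theorem zeta_mul_self (α : ℕ) :
    zeta α * zeta α = 1 + ((1 + (-1) ^ α) / 2 : ℂ) • kronPauliSum (2 * α) := by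
  rw [zeta_eq, smul_mul_smul_comm, add_mul, mul_add, mul_add, kronPauliSum_mul_self,
    I_pow_two_mul_add_neg_I_pow_two_mul]
  simp only [one_mul, mul_one]
  match_scalars <;> ring

theorem zeta_squared_general (α : ℕ) :
    (Odd α → zeta α * zeta α = 1 ∧ spectrum ℂ (zeta α) ⊆ {1, -1}) ∧
    (Even α → zeta α * zeta α = (2:ℂ) • zeta α ∧ spectrum ℂ (zeta α) ⊆ {0, 2}) := by
  constructor
  · intro hodd
    have hsq : zeta α * zeta α = 1 := by
      rw [zeta_mul_self, hodd.neg_one_pow]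
      simp
    refine ⟨hsq, spectrum_subset_pair_of_mul_eq_zero ?_⟩
    simp only [map_one, map_neg, sub_neg_eq_add, mul_add, sub_mul, hsq, one_mul, mul_one]
    abel
  · intro heven
    have hsq : zeta α * zeta α = (2:ℂ) • zeta α := by
      rw [zeta_mul_self, heven.neg_one_pow, zeta_eq, smul_smul]
      norm_num
    refine ⟨hsq, spectrum_subset_pair_of_mul_eq_zero ?_⟩
    simp only [map_zero, sub_zero, mul_sub, hsq, Algebra.algebraMap_eq_smul_one, mul_smul_one,
      sub_self]

/-- if `α` is odd then `ζ_α² = I`, so its eigenvalues lie in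
`{+1, -1}`; if `α` is even then `ζ_α² = 2ζ_α`, so `ζ_α/2` is a projector and
its eigenvalues lie in `{0, 2}`. -/
theorem zeta_squared (α : ℕ) (hα : 1 ≤ α) :
    (Odd α → zeta α * zeta α = 1 ∧ spectrum ℂ (zeta α) ⊆ {1, -1}) ∧
    (Even α → zeta α * zeta α = (2:ℂ) • zeta α ∧ spectrum ℂ (zeta α) ⊆ {0, 2}) :=
  zeta_squared_general α

end
end
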